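/- Let X be a complex Banach space with a Schauder basis (e_j, e*_j)_{j≥1}, let G be a group of invertible continuous linear operators on X, and let K ⊆ X be G-invariant (g(K) ⊆ K for all g ∈ G). Suppose there exists a strictly increasing sequence (j_n) ⊆ ℕ such that: (1) Σ_{j_n}(G) is a finite group under composition for each n; (2) g maps the closed linear span of {e_i : i ≥ j_n + 1} into itself for every n and every g ∈ G; (3) π_{j_n}(K) ⊆ K for every n. If z ∈ X \ K can be separated from K by a continuous polynomial Q (sup_{w∈K}|Q(w)| < |Q(z)|), then there exists a continuous polynomial P on X with P ∘ g = P for every g ∈ G and sup_{w∈K}|P(w)| < |P(z)|. Furthermore, if Q is homogeneous, then P can be chosen to be homogeneous. -/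

import Mathlib

section SchauderBasis

variable {X : Type*} [NormedAddCommGroup X] [NormedSpace ℂ X]

/-- A continuous polynomial on a normed space `X` over `𝕜`: a function of the form
`P x = a₀ + ∑_{k=1}^{N} A_k (x, …, x)` where each `A_k` is a continuous `k`-linear map. -/
def IsContinuousPolynomial (P : X → ℂ) : Prop :=
  ∃ (N : ℕ) (a₀ : ℂ)
    (A : (k : Fin N) → ContinuousMultilinearMap ℂ (fun _ : Fin (k.1 + 1) => X) ℂ),
    ∀ x, P x = a₀ + ∑ k, A k (fun _ => x)

/-- An `m`-homogeneous continuous polynomial. -/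
def IsHomogeneousPolynomial (m : ℕ) (P : X → ℂ) : Prop :=
  ∃ A : ContinuousMultilinearMap ℂ (fun _ : Fin m => X) ℂ, ∀ x, P x = A (fun _ => x)

/-- The canonical projection `π_n(x) = ∑_{j<n} e*_j(x) • e_j` associated with a Schauder
basis `(e_j, e*_j)` (indices here run over `0, 1, …, n-1`). -/
noncomputable def schauderProj (e : ℕ → X) (eStar : ℕ → X →L[ℂ] ℂ) (n : ℕ) (x : X) : X :=
  ∑ j ∈ Finset.range n, eStar j x • e j

/-- The coordinate map `Π_n : X → ℂⁿ`. -/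
noncomputable def schauderCoord (eStar : ℕ → X →L[ℂ] ℂ) (n : ℕ) (x : X) : Fin n → ℂ :=
  fun i => eStar i x

/-- The inclusion `ι_n : ℂⁿ → X`. -/
noncomputable def schauderIncl (e : ℕ → X) (n : ℕ) (w : Fin n → ℂ) : X :=
  ∑ i : Fin n, w i • e i

/-- `Σ_n(G) = { Π_n ∘ g ∘ ι_n : g ∈ G }`, as a set of maps `ℂⁿ → ℂⁿ`. -/
noncomputable def SigmaSet (e : ℕ → X) (eStar : ℕ → X →L[ℂ] ℂ)
    (G : Subgroup (X ≃L[ℂ] X)) (n : ℕ) : Set ((Fin n → ℂ) → Fin n → ℂ) :=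
  {T | ∃ g ∈ G, T = fun w => schauderCoord eStar n ((g : X ≃L[ℂ] X) (schauderIncl e n w))}

/-- The closed linear span of the basis vectors `e_i` with index `i ≥ n`
(`0`-based; these are the basis vectors beyond the first `n`). -/
def tailSpan (e : ℕ → X) (n : ℕ) : Set X :=
  closure (Submodule.span ℂ {v : X | ∃ i, n ≤ i ∧ v = e i} : Set X)

end SchauderBasis

/-!
Choose `n` with `‖Q (π_{j n} z)‖ > c ≥ sup_K ‖Q‖`. For `T ∈ Σ_{j n}(G)` the polynomial
`Q_T = Q ∘ ι ∘ T ∘ Π` is bounded by `c` on `K`, since `ι ∘ T ∘ Π = π ∘ g ∘ π` preserves `K`.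
As `g ∈ G` preserves the tail span, `Π ∘ g = T_g ∘ Π` with `T_g = Π ∘ g ∘ ι`, so
`Q_T ∘ g = Q_{T ∘ T_g}` and `g` permutes the family `(Q_T)`. Hence `P = ∑_T Q_T ^ s` is
`G`-invariant with `‖P‖ ≤ #Σ c ^ s` on `K`, and since `‖Q_id z‖ > c`, a Turán-type estimate for
power sums yields an `s` with `‖P z‖ > #Σ c ^ s`.
-/

section Polynomial

variable {X : Type*} [NormedAddCommGroup X] [NormedSpace ℂ X]

open ContinuousMultilinearMap

theorem IsHomogeneousPolynomial.const (a : ℂ) : IsHomogeneousPolynomial 0 (fun _ : X => a) :=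
  ⟨constOfIsEmpty ℂ _ a, fun _ => rfl⟩

theorem IsHomogeneousPolynomial.zero (m : ℕ) : IsHomogeneousPolynomial m (0 : X → ℂ) :=
  ⟨0, fun _ => rfl⟩

theorem IsHomogeneousPolynomial.add {m : ℕ} {f g : X → ℂ} (hf : IsHomogeneousPolynomial m f)
    (hg : IsHomogeneousPolynomial m g) : IsHomogeneousPolynomial m (f + g) := by
  obtain ⟨A, hA⟩ := hf
  obtain ⟨B, hB⟩ := hg
  exact ⟨A + B, fun x => by simp [hA, hB]⟩

theorem IsHomogeneousPolynomial.mul {m n : ℕ} {f g : X → ℂ} (hf : IsHomogeneousPolynomial m f)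
    (hg : IsHomogeneousPolynomial n g) : IsHomogeneousPolynomial (m + n) (f * g) := by
  obtain ⟨A, hA⟩ := hf
  obtain ⟨B, hB⟩ := hg
  refine ⟨((A.smulRight B).uncurrySum).domDomCongr finSumFinEquiv, fun x => ?_⟩
  simp [hA, hB, uncurrySum_apply, smulRight_apply, Function.comp_def]

theorem IsHomogeneousPolynomial.pow {m : ℕ} {f : X → ℂ} (hf : IsHomogeneousPolynomial m f)
    (s : ℕ) : IsHomogeneousPolynomial (m * s) (f ^ s) := by
  induction s with
  | zero => exact IsHomogeneousPolynomial.const 1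
  | succ s ih => simpa [pow_succ, Nat.mul_succ] using ih.mul hf

theorem IsHomogeneousPolynomial.comp {m : ℕ} {f : X → ℂ} (hf : IsHomogeneousPolynomial m f)
    (L : X →L[ℂ] X) : IsHomogeneousPolynomial m (f ∘ L) := by
  obtain ⟨A, hA⟩ := hf
  exact ⟨A.compContinuousLinearMap fun _ => L, fun x => by simp [hA]⟩

theorem IsHomogeneousPolynomial.sum {m : ℕ} {ι : Type*} (s : Finset ι) {f : ι → X → ℂ}
    (hf : ∀ i ∈ s, IsHomogeneousPolynomial m (f i)) : IsHomogeneousPolynomial m (∑ i ∈ s, f i) :=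
  Finset.sum_induction f _ (fun _ _ => IsHomogeneousPolynomial.add) (.zero m) hf

theorem isContinuousPolynomial_sum_diag {ι : Type*} [Fintype ι] (d : ι → ℕ)
    (A : (i : ι) → ContinuousMultilinearMap ℂ (fun _ : Fin (d i) => X) ℂ) :
    IsContinuousPolynomial fun x => ∑ i, A i fun _ => x := by
  set N := Finset.univ.sup d
  -- the maps of degree `0` give the constant term, the `k`-th map collects those of degree `k + 1`
  refine ⟨N, ∑ i, if d i = 0 then A i (fun _ => 0) else 0,
    fun k => ∑ i, if h : d i = k.1 + 1 then (A i).domDomCongr (finCongr h) else 0, fun x => ?_⟩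
  have hsplit : ∀ i, A i (fun _ => x) = (if d i = 0 then A i (fun _ => 0) else 0) +
      ∑ k : Fin N, if d i = k.1 + 1 then A i (fun _ => x) else 0 := by
    intro i
    by_cases h0 : d i = 0
    · have : IsEmpty (Fin (d i)) := by rw [h0]; infer_instance
      simp [h0, Subsingleton.elim (fun _ : Fin (d i) => x) (fun _ => 0)]
    · obtain ⟨n, hn⟩ := Nat.exists_eq_succ_of_ne_zero h0
      have hnN : n < N := by have := Finset.le_sup (f := d) (Finset.mem_univ i); omega
      rw [Finset.sum_eq_single ⟨n, hnN⟩
        (fun k _ hk => if_neg fun h => hk (Fin.ext (show k.1 = n by omega))) (by simp)]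
      simp [hn]
  have hdeg : ∀ k : Fin N, (∑ i, if h : d i = k.1 + 1 then (A i).domDomCongr (finCongr h) else 0)
      (fun _ => x) = ∑ i, if d i = k.1 + 1 then A i (fun _ => x) else 0 := by
    intro k
    rw [sum_apply]
    refine Finset.sum_congr rfl fun i _ => ?_
    split_ifs <;> simp
  simp only [hdeg]
  rw [Finset.sum_comm, ← Finset.sum_add_distrib]
  exact Finset.sum_congr rfl fun i _ => hsplit i

theorem IsContinuousPolynomial.comp {f : X → ℂ} (hf : IsContinuousPolynomial f)
    (L : X →L[ℂ] X) : IsContinuousPolynomial (f ∘ L) := by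
  obtain ⟨N, a₀, A, hA⟩ := hf
  exact ⟨N, a₀, fun k => (A k).compContinuousLinearMap fun _ => L, fun x => by simp [hA]⟩

theorem IsHomogeneousPolynomial.isContinuousPolynomial {m : ℕ} {f : X → ℂ}
    (hf : IsHomogeneousPolynomial m f) : IsContinuousPolynomial f := by
  obtain ⟨A, hA⟩ := hf
  simpa [← hA] using isContinuousPolynomial_sum_diag (ι := Unit) (fun _ => m) (fun _ => A)

theorem IsContinuousPolynomial.continuous {f : X → ℂ} (hf : IsContinuousPolynomial f) :
    Continuous f := by
  obtain ⟨N, a₀, A, hA⟩ := hf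
  rw [funext hA]
  fun_prop

variable (X) in
def continuousPolynomialSubalgebra : Subalgebra ℂ (X → ℂ) :=
  (Submodule.span ℂ {f | ∃ m, IsHomogeneousPolynomial m f}).toSubalgebra
    (Submodule.subset_span ⟨0, .const 1⟩)
    fun f g hf hg => by
      have hfg := Submodule.mul_mem_mul hf hg
      rw [Submodule.span_mul_span] at hfg
      refine Submodule.span_mono ?_ hfg
      rintro _ ⟨f, ⟨m, hf⟩, g, ⟨n, hg⟩, rfl⟩
      exact ⟨m + n, hf.mul hg⟩

theorem mem_continuousPolynomialSubalgebra {f : X → ℂ} :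
    f ∈ continuousPolynomialSubalgebra X ↔ IsContinuousPolynomial f := by
  refine ⟨fun hf => ?_, fun ⟨N, a₀, A, hA⟩ => ?_⟩
  · obtain ⟨n, c, g, rfl⟩ := Submodule.mem_span_set'.mp hf
    choose m A hA using fun i => (g i).2
    convert isContinuousPolynomial_sum_diag m fun i => c i • A i using 2 with x
    simp [hA]
  · have hf : f = algebraMap ℂ (X → ℂ) a₀ + ∑ k, fun x => A k fun _ => x := by
      ext x; simp [hA]
    rw [hf]
    refine add_mem (Subalgebra.algebraMap_mem _ a₀) (sum_mem fun k _ => ?_)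
    exact Submodule.subset_span ⟨_, A k, fun _ => rfl⟩

theorem IsContinuousPolynomial.pow {f : X → ℂ} (hf : IsContinuousPolynomial f) (s : ℕ) :
    IsContinuousPolynomial (f ^ s) :=
  mem_continuousPolynomialSubalgebra.mp (pow_mem (mem_continuousPolynomialSubalgebra.mpr hf) s)

theorem IsContinuousPolynomial.sum {ι : Type*} (s : Finset ι) {f : ι → X → ℂ}
    (hf : ∀ i ∈ s, IsContinuousPolynomial (f i)) : IsContinuousPolynomial (∑ i ∈ s, f i) :=
  mem_continuousPolynomialSubalgebra.mp
    (sum_mem fun i hi => mem_continuousPolynomialSubalgebra.mpr (hf i hi))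

end Polynomial

section PowerSums

open Filter Finset

/-- Two nearby terms `ω ^ φ k`, `ω ^ φ k'` of a convergent subsequence on the compact torus
give `ω ^ (φ k' - φ k)` close to `1`. -/
theorem frequently_forall_norm_pow_sub_one_lt {ι : Type*} [Fintype ι] (ω : ι → ℂ)
    (hω : ∀ t, ‖ω t‖ = 1) {ε : ℝ} (hε : 0 < ε) :
    ∃ᶠ d in atTop, ∀ t, ‖ω t ^ d - 1‖ < ε := by
  obtain ⟨a, -, φ, hφ, hlim⟩ := tendsto_subseq_of_bounded (x := fun k t => ω t ^ k)
    (Metric.isBounded_closedBall (x := 0) (r := 1))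
    (fun k => by simp [pi_norm_le_iff_of_nonneg, hω])
  obtain ⟨N, hN⟩ := Metric.cauchySeq_iff'.mp hlim.cauchySeq ε hε
  refine frequently_atTop.mpr fun S => ⟨φ (N + S) - φ N, ?_, fun t => ?_⟩
  · have := hφ.add_le_nat S N
    rw [add_comm S N] at this
    omega
  · have hclose : ‖ω t ^ φ (N + S) - ω t ^ φ N‖ < ε :=
      (norm_le_pi_norm _ t).trans_lt (by simpa [dist_eq_norm] using hN (N + S) (by omega))
    have hfactor : ω t ^ φ (N + S) - ω t ^ φ N = ω t ^ φ N * (ω t ^ (φ (N + S) - φ N) - 1) := by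
      rw [mul_sub, ← pow_add, Nat.add_sub_cancel' (hφ.monotone (by omega)), mul_one]
    rwa [hfactor, norm_mul, norm_pow, hω, one_pow, one_mul] at hclose

/-- For infinitely many `s` the terms of modulus one are simultaneously close to `1`, and for
large `s` the remaining terms and `c ^ s` are negligible. -/
theorem exists_card_mul_pow_lt_norm_sum_pow_of_norm_le_one {ι : Type*} (F : Finset ι)
    (b : ι → ℂ) (hb : ∀ t ∈ F, ‖b t‖ ≤ 1) (hb1 : ∃ t ∈ F, ‖b t‖ = 1) {c : ℝ} (hc0 : 0 ≤ c)
    (hc1 : c < 1) : ∃ s : ℕ, #F * c ^ s < ‖∑ t ∈ F, b t ^ s‖ := by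
  set W := F.filter (‖b ·‖ = 1)
  set R := F.filter (¬ ‖b ·‖ = 1)
  have hsmall : ∀ᶠ s in atTop, ∑ t ∈ R, ‖b t‖ ^ s + #F * c ^ s < 1 / 2 := by
    have hR : ∀ t ∈ R, ‖b t‖ < 1 := fun t ht =>
      (hb t (mem_filter.mp ht).1).lt_of_ne (mem_filter.mp ht).2
    have hlim : Tendsto (fun s : ℕ => ∑ t ∈ R, ‖b t‖ ^ s + #F * c ^ s) atTop (nhds 0) := by
      simpa using (tendsto_finsetSum R fun t ht =>
        tendsto_pow_atTop_nhds_zero_of_lt_one (norm_nonneg _) (hR t ht)).add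
        ((tendsto_pow_atTop_nhds_zero_of_lt_one hc0 hc1).const_mul (#F : ℝ))
    exact hlim.eventually_lt_const (by norm_num)
  obtain ⟨s, hnear, hs⟩ := ((frequently_forall_norm_pow_sub_one_lt (fun t : W => b t)
    (fun t => (mem_filter.mp t.2).2) (by norm_num : (0 : ℝ) < 1 / 2)).and_eventually hsmall).exists
  have hW : 1 / 2 < ‖∑ t ∈ W, b t ^ s‖ := by
    have hre : ∀ t ∈ W, 1 / 2 < (b t ^ s).re := fun t ht => by
      have h := (Complex.abs_re_le_norm _).trans_lt (hnear ⟨t, ht⟩)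
      rw [Complex.sub_re, Complex.one_re, abs_lt] at h
      linarith
    obtain ⟨t₀, ht₀, hbt₀⟩ := hb1
    have hWne : W.Nonempty := ⟨t₀, mem_filter.mpr ⟨ht₀, hbt₀⟩⟩
    calc (1 / 2 : ℝ) ≤ #W * (1 / 2) :=
          le_mul_of_one_le_left (by norm_num) (by exact_mod_cast hWne.card_pos)
      _ = ∑ _t ∈ W, 1 / 2 := by rw [sum_const, nsmul_eq_mul]
      _ < ∑ t ∈ W, (b t ^ s).re := sum_lt_sum_of_nonempty hWne hre
      _ = (∑ t ∈ W, b t ^ s).re := (Complex.re_sum _ _).symm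
      _ ≤ ‖∑ t ∈ W, b t ^ s‖ := Complex.re_le_norm _
  have hR : ‖∑ t ∈ R, b t ^ s‖ ≤ ∑ t ∈ R, ‖b t‖ ^ s := by
    simpa only [norm_pow] using norm_sum_le R fun t => b t ^ s
  refine ⟨s, ?_⟩
  calc (#F : ℝ) * c ^ s < ‖∑ t ∈ W, b t ^ s‖ - ‖∑ t ∈ R, b t ^ s‖ := by linarith
    _ ≤ ‖∑ t ∈ W, b t ^ s + ∑ t ∈ R, b t ^ s‖ := norm_sub_le_norm_add _ _
    _ = ‖∑ t ∈ F, b t ^ s‖ := by rw [sum_filter_add_sum_filter_not]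

theorem exists_card_mul_pow_lt_norm_sum_pow {ι : Type*} (F : Finset ι) (a : ι → ℂ) {c : ℝ}
    (hc : 0 ≤ c) (h : ∃ t ∈ F, c < ‖a t‖) : ∃ s : ℕ, #F * c ^ s < ‖∑ t ∈ F, a t ^ s‖ := by
  obtain ⟨t₀, ht₀, hct₀⟩ := h
  set M := F.sup' ⟨t₀, ht₀⟩ (‖a ·‖)
  have hcM : c < M := hct₀.trans_le (le_sup' (‖a ·‖) ht₀)
  have hM : 0 < M := hc.trans_lt hcM
  have hnorm : ∀ t, ‖a t / M‖ = ‖a t‖ / M := fun t => by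
    rw [norm_div, Complex.norm_real, Real.norm_of_nonneg hM.le]
  obtain ⟨s, hs⟩ := exists_card_mul_pow_lt_norm_sum_pow_of_norm_le_one F (fun t => a t / M)
    (fun t ht => by rw [hnorm, div_le_one hM]; exact le_sup' (‖a ·‖) ht)
    (by
      obtain ⟨t, ht, hMt⟩ := exists_mem_eq_sup' ⟨t₀, ht₀⟩ (‖a ·‖)
      exact ⟨t, ht, by rw [hnorm, ← hMt, div_self hM.ne']⟩)
    (div_nonneg hc hM.le) ((div_lt_one hM).mpr hcM)
  have hscale : ∑ t ∈ F, a t ^ s = (M : ℂ) ^ s * ∑ t ∈ F, (a t / M) ^ s := by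
    rw [mul_sum]
    refine sum_congr rfl fun t _ => ?_
    rw [div_pow, mul_div_cancel₀ _ (pow_ne_zero _ (by exact_mod_cast hM.ne'))]
  refine ⟨s, ?_⟩
  rw [hscale, norm_mul, norm_pow, Complex.norm_real, Real.norm_of_nonneg hM.le]
  calc (#F : ℝ) * c ^ s = M ^ s * (#F * (c / M) ^ s) := by
        rw [div_pow]; field_simp
    _ < M ^ s * ‖∑ t ∈ F, (a t / M) ^ s‖ := mul_lt_mul_of_pos_left hs (by positivity)

end PowerSums

section Schauder

variable {X : Type*} [NormedAddCommGroup X] [NormedSpace ℂ X] {e : ℕ → X}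
  {eStar : ℕ → X →L[ℂ] ℂ} {n : ℕ}

variable (e eStar n) in
noncomputable def schauderProjCLM : X →L[ℂ] X :=
  ∑ j ∈ Finset.range n, (eStar j).smulRight (e j)

theorem schauderProjCLM_apply (x : X) :
    schauderProjCLM e eStar n x = schauderProj e eStar n x := by
  simp [schauderProjCLM, schauderProj]

theorem schauderIncl_schauderCoord (x : X) :
    schauderIncl e n (schauderCoord eStar n x) = schauderProj e eStar n x :=
  Fin.sum_univ_eq_sum_range (fun j => eStar j x • e j) n

theorem sub_schauderProj_mem_tailSpan
    (hbasis : ∀ x : X, Filter.Tendsto (fun n => schauderProj e eStar n x) Filter.atTop (nhds x))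
    (x : X) : x - schauderProj e eStar n x ∈ tailSpan e n := by
  refine mem_closure_of_tendsto ((hbasis x).sub tendsto_const_nhds) ?_
  filter_upwards [Filter.eventually_ge_atTop n] with N hN
  rw [schauderProj, schauderProj, ← Finset.sum_range_add_sum_Ico _ hN, add_sub_cancel_left]
  exact Submodule.sum_mem _ fun j hj =>
    Submodule.smul_mem _ _ (Submodule.subset_span ⟨j, (Finset.mem_Ico.mp hj).1, rfl⟩)

theorem eq_zero_of_mem_tailSpan (hdual : ∀ i j, eStar i (e j) = if i = j then 1 else 0)
    {i : ℕ} (hi : i < n) {y : X} (hy : y ∈ tailSpan e n) : eStar i y = 0 := by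
  refine closure_minimal ?_ (eStar i).isClosed_ker (show y ∈ closure _ from hy)
  rw [SetLike.coe_subset_coe, Submodule.span_le]
  rintro _ ⟨k, hk, rfl⟩
  simp [hdual, show i ≠ k by omega]

theorem schauderCoord_apply_schauderProj (hdual : ∀ i j, eStar i (e j) = if i = j then 1 else 0)
    (hbasis : ∀ x : X, Filter.Tendsto (fun n => schauderProj e eStar n x) Filter.atTop (nhds x))
    {g : X →L[ℂ] X} (hg : ∀ x ∈ tailSpan e n, g x ∈ tailSpan e n) (x : X) :
    schauderCoord eStar n (g (schauderProj e eStar n x)) = schauderCoord eStar n (g x) := by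
  funext i
  have hzero := eq_zero_of_mem_tailSpan hdual i.isLt (hg _ (sub_schauderProj_mem_tailSpan hbasis x))
  rw [map_sub, map_sub, sub_eq_zero] at hzero
  exact hzero.symm

end Schauder

theorem sum_comp_right_eq_sum {α M : Type*} [AddCommMonoid M] {S : Finset (α → α)}
    (hS : ∀ T ∈ S, ∀ T' ∈ S, T ∘ T' ∈ S) {τ σ : α → α} (hτ : τ ∈ S) (hσ : σ ∈ S)
    (hτσ : τ ∘ σ = id) (hστ : σ ∘ τ = id) (F : (α → α) → M) :
    ∑ T ∈ S, F (T ∘ τ) = ∑ T ∈ S, F T :=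
  Finset.sum_nbij' (· ∘ τ) (· ∘ σ) (fun T hT => hS T hT τ hτ) (fun T hT => hS T hT σ hσ)
    (fun T _ => by simp only [Function.comp_assoc, hτσ, Function.comp_id])
    (fun T _ => by simp only [Function.comp_assoc, hστ, Function.comp_id]) (fun _ _ => rfl)

section Symmetrization

variable {X : Type*} [NormedAddCommGroup X] [NormedSpace ℂ X] {e : ℕ → X}
  {eStar : ℕ → X →L[ℂ] ℂ} {G : Subgroup (X ≃L[ℂ] X)} {n : ℕ}

variable (e eStar) in
noncomputable def symmetrization (n : ℕ) (S : Finset ((Fin n → ℂ) → Fin n → ℂ)) (Q : X → ℂ)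
    (s : ℕ) (x : X) : ℂ :=
  ∑ T ∈ S, Q (schauderIncl e n (T (schauderCoord eStar n x))) ^ s

theorem symmetrization_eq_sum_pow (S : Finset ((Fin n → ℂ) → Fin n → ℂ)) (Q : X → ℂ) (s : ℕ) :
    symmetrization e eStar n S Q s =
      ∑ T ∈ S, (fun x => Q (schauderIncl e n (T (schauderCoord eStar n x)))) ^ s := by
  ext x
  simp [symmetrization]

theorem exists_clm_of_mem_sigmaSet {T : (Fin n → ℂ) → Fin n → ℂ}
    (hT : T ∈ SigmaSet e eStar G n) : ∃ L : X →L[ℂ] X,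
      ∀ x, schauderIncl e n (T (schauderCoord eStar n x)) = L x := by
  obtain ⟨g, -, rfl⟩ := hT
  refine ⟨schauderProjCLM e eStar n ∘L (g : X →L[ℂ] X) ∘L schauderProjCLM e eStar n, fun x => ?_⟩
  simp [schauderIncl_schauderCoord, schauderProjCLM_apply]

theorem schauderIncl_mem_of_mem_sigmaSet {K : Set X} (hK : ∀ g ∈ G, ∀ x ∈ K, g x ∈ K)
    (hprojK : ∀ x ∈ K, schauderProj e eStar n x ∈ K) {T : (Fin n → ℂ) → Fin n → ℂ}
    (hT : T ∈ SigmaSet e eStar G n) {w : X} (hw : w ∈ K) :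
    schauderIncl e n (T (schauderCoord eStar n w)) ∈ K := by
  obtain ⟨g, hg, rfl⟩ := hT
  simp only [schauderIncl_schauderCoord]
  exact hprojK _ (hK g hg _ (hprojK w hw))

theorem IsContinuousPolynomial.symmetrization {S : Finset ((Fin n → ℂ) → Fin n → ℂ)}
    (hS : ∀ T ∈ S, T ∈ SigmaSet e eStar G n) {Q : X → ℂ} (hQ : IsContinuousPolynomial Q)
    (s : ℕ) : IsContinuousPolynomial (symmetrization e eStar n S Q s) := by
  rw [symmetrization_eq_sum_pow]
  refine IsContinuousPolynomial.sum S fun T hT => IsContinuousPolynomial.pow ?_ s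
  obtain ⟨L, hL⟩ := exists_clm_of_mem_sigmaSet (hS T hT)
  simp only [hL]
  exact hQ.comp L

theorem IsHomogeneousPolynomial.symmetrization {S : Finset ((Fin n → ℂ) → Fin n → ℂ)}
    (hS : ∀ T ∈ S, T ∈ SigmaSet e eStar G n) {m : ℕ} {Q : X → ℂ}
    (hQ : IsHomogeneousPolynomial m Q) (s : ℕ) :
    IsHomogeneousPolynomial (m * s) (symmetrization e eStar n S Q s) := by
  rw [symmetrization_eq_sum_pow]
  refine IsHomogeneousPolynomial.sum S fun T hT => IsHomogeneousPolynomial.pow ?_ s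
  obtain ⟨L, hL⟩ := exists_clm_of_mem_sigmaSet (hS T hT)
  simp only [hL]
  exact hQ.comp L

theorem symmetrization_apply_eq (hdual : ∀ i j, eStar i (e j) = if i = j then 1 else 0)
    (hbasis : ∀ x : X, Filter.Tendsto (fun n => schauderProj e eStar n x) Filter.atTop (nhds x))
    {S : Finset ((Fin n → ℂ) → Fin n → ℂ)} (hS : ∀ T, T ∈ S ↔ T ∈ SigmaSet e eStar G n)
    (hcomp : ∀ T ∈ SigmaSet e eStar G n, ∀ T' ∈ SigmaSet e eStar G n,
      T ∘ T' ∈ SigmaSet e eStar G n)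
    (hinv : ∀ T ∈ SigmaSet e eStar G n, ∃ T' ∈ SigmaSet e eStar G n, T ∘ T' = id ∧ T' ∘ T = id)
    {g : X ≃L[ℂ] X} (hg : g ∈ G) (hgtail : ∀ x ∈ tailSpan e n, g x ∈ tailSpan e n)
    (Q : X → ℂ) (s : ℕ) (x : X) :
    symmetrization e eStar n S Q s (g x) = symmetrization e eStar n S Q s x := by
  set τ := fun w => schauderCoord eStar n (g (schauderIncl e n w))
  have hτ : τ ∈ S := (hS τ).mpr ⟨g, hg, rfl⟩
  have hcoord : schauderCoord eStar n (g x) = τ (schauderCoord eStar n x) := by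
    simp only [τ, schauderIncl_schauderCoord]
    exact (schauderCoord_apply_schauderProj hdual hbasis (g := g) hgtail x).symm
  obtain ⟨σ, hσ, hτσ, hστ⟩ := hinv τ ⟨g, hg, rfl⟩
  simp only [symmetrization, hcoord]
  refine sum_comp_right_eq_sum (fun T hT T' hT' => (hS _).mpr (hcomp T ((hS T).mp hT) T'
    ((hS T').mp hT'))) hτ ((hS σ).mpr hσ) hτσ hστ
    fun T => Q (schauderIncl e n (T (schauderCoord eStar n x))) ^ s

theorem exists_symmetrization_separating {K : Set X} (hK : ∀ g ∈ G, ∀ x ∈ K, g x ∈ K)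
    (hprojK : ∀ x ∈ K, schauderProj e eStar n x ∈ K) {S : Finset ((Fin n → ℂ) → Fin n → ℂ)}
    (hS : ∀ T ∈ S, T ∈ SigmaSet e eStar G n) (hid : id ∈ S) {Q : X → ℂ} {c : ℝ} (hc : 0 ≤ c)
    (hQK : ∀ w ∈ K, ‖Q w‖ ≤ c) {z : X} (hz : c < ‖Q (schauderProj e eStar n z)‖) :
    ∃ s, ∃ c', c' < ‖symmetrization e eStar n S Q s z‖ ∧
      ∀ w ∈ K, ‖symmetrization e eStar n S Q s w‖ ≤ c' := by
  obtain ⟨s, hs⟩ := exists_card_mul_pow_lt_norm_sum_pow S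
    (fun T => Q (schauderIncl e n (T (schauderCoord eStar n z)))) hc
    ⟨id, hid, by simpa [schauderIncl_schauderCoord] using hz⟩
  refine ⟨s, _, hs, fun w hw => (norm_sum_le _ _).trans
    ((Finset.sum_le_card_nsmul _ _ _ fun T hT => ?_).trans_eq (nsmul_eq_mul _ _))⟩
  rw [norm_pow]
  exact pow_le_pow_left₀ (norm_nonneg _)
    (hQK _ (schauderIncl_mem_of_mem_sigmaSet hK hprojK (hS T hT) hw)) s

end Symmetrization

theorem statement8_general {X : Type*} [NormedAddCommGroup X] [NormedSpace ℂ X]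
    (e : ℕ → X) (eStar : ℕ → X →L[ℂ] ℂ)
    (hdual : ∀ i j, eStar i (e j) = if i = j then 1 else 0)
    (hbasis : ∀ x : X,
      Filter.Tendsto (fun n => schauderProj e eStar n x) Filter.atTop (nhds x))
    (G : Subgroup (X ≃L[ℂ] X))
    (K : Set X) (hK : ∀ g ∈ G, ∀ x ∈ K, (g : X ≃L[ℂ] X) x ∈ K)
    (j : ℕ → ℕ) (hjmono : StrictMono j)
    (hfin : ∀ n, (SigmaSet e eStar G (j n)).Finite)
    (hcomp : ∀ n, ∀ T ∈ SigmaSet e eStar G (j n), ∀ S ∈ SigmaSet e eStar G (j n),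
      T ∘ S ∈ SigmaSet e eStar G (j n))
    (hid : ∀ n, id ∈ SigmaSet e eStar G (j n))
    (hinv : ∀ n, ∀ T ∈ SigmaSet e eStar G (j n), ∃ S ∈ SigmaSet e eStar G (j n),
      T ∘ S = id ∧ S ∘ T = id)
    (htail : ∀ n, ∀ g ∈ G, ∀ x ∈ tailSpan e (j n), (g : X ≃L[ℂ] X) x ∈ tailSpan e (j n))
    (hprojK : ∀ n, ∀ x ∈ K, schauderProj e eStar (j n) x ∈ K)
    (z : X)
    (Q : X → ℂ) (hQ : IsContinuousPolynomial Q)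
    (hsep : ∃ c, c < ‖Q z‖ ∧ ∀ w ∈ K, ‖Q w‖ ≤ c) :
    (∃ P : X → ℂ, IsContinuousPolynomial P ∧
      (∀ g ∈ G, ∀ x : X, P ((g : X ≃L[ℂ] X) x) = P x) ∧
      ∃ c, c < ‖P z‖ ∧ ∀ w ∈ K, ‖P w‖ ≤ c) ∧
    ∀ m : ℕ, IsHomogeneousPolynomial m Q →
      ∃ (m' : ℕ) (P : X → ℂ), IsHomogeneousPolynomial m' P ∧
        (∀ g ∈ G, ∀ x : X, P ((g : X ≃L[ℂ] X) x) = P x) ∧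
        ∃ c, c < ‖P z‖ ∧ ∀ w ∈ K, ‖P w‖ ≤ c := by
  obtain ⟨c, hcQz, hcK⟩ := hsep
  rcases K.eq_empty_or_nonempty with rfl | ⟨w₀, hw₀⟩
  · have hone : ∀ g ∈ G, ∀ x : X, (fun _ => (1 : ℂ)) (g x) = 1 := fun _ _ _ => rfl
    exact ⟨⟨_, (IsHomogeneousPolynomial.const 1).isContinuousPolynomial, hone, 0, by simp, by simp⟩,
      fun _ _ => ⟨0, _, .const 1, hone, 0, by simp, by simp⟩⟩
  have hc : 0 ≤ c := (norm_nonneg _).trans (hcK w₀ hw₀)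
  obtain ⟨n, hn⟩ : ∃ n, c < ‖Q (schauderProj e eStar (j n) z)‖ :=
    (((hQ.continuous.tendsto z).comp ((hbasis z).comp hjmono.tendsto_atTop)).norm
      |>.eventually_const_lt hcQz).exists
  set S := (hfin n).toFinset
  have hS : ∀ T, T ∈ S ↔ T ∈ SigmaSet e eStar G (j n) := fun T => (hfin n).mem_toFinset
  have hSsub : ∀ T ∈ S, T ∈ SigmaSet e eStar G (j n) := fun T => (hS T).mp
  obtain ⟨s, hsep⟩ := exists_symmetrization_separating hK (hprojK n) hSsub
    ((hS id).mpr (hid n)) hc hcK hn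
  have hPinv : ∀ g ∈ G, ∀ x : X, symmetrization e eStar (j n) S Q s (g x) =
      symmetrization e eStar (j n) S Q s x := fun g hg =>
    symmetrization_apply_eq hdual hbasis hS (hcomp n) (hinv n) hg (htail n g hg) Q s
  exact ⟨⟨_, hQ.symmetrization hSsub s, hPinv, hsep⟩,
    fun m hm => ⟨m * s, _, hm.symmetrization hSsub s, hPinv, hsep⟩⟩

/-- Let `X` be a complex Banach space with Schauder basis `(e_j, e*_j)`, `G`
a group of invertible continuous linear operators on `X`, `K` a `G`-invariant set. Suppose
there is a strictly increasing sequence `(j_n)` such that each `Σ_{j_n}(G)` is a finite group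
under composition, each `g ∈ G` maps the closed span of the basis vectors beyond the first
`j_n` into itself, and `π_{j_n}(K) ⊆ K`. If `z ∉ K` is separated from `K` by a continuous
polynomial `Q`, then some `G`-invariant continuous polynomial `P` separates `z` from `K`;
if `Q` is homogeneous, `P` can be chosen homogeneous. -/
theorem statement8 {X : Type*} [NormedAddCommGroup X] [NormedSpace ℂ X] [CompleteSpace X]
    (e : ℕ → X) (eStar : ℕ → X →L[ℂ] ℂ)
    (hdual : ∀ i j, eStar i (e j) = if i = j then 1 else 0)
    (hbasis : ∀ x : X,
      Filter.Tendsto (fun n => schauderProj e eStar n x) Filter.atTop (nhds x))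
    (G : Subgroup (X ≃L[ℂ] X))
    (K : Set X) (hK : ∀ g ∈ G, ∀ x ∈ K, (g : X ≃L[ℂ] X) x ∈ K)
    (j : ℕ → ℕ) (hjmono : StrictMono j)
    (hfin : ∀ n, (SigmaSet e eStar G (j n)).Finite)
    (hcomp : ∀ n, ∀ T ∈ SigmaSet e eStar G (j n), ∀ S ∈ SigmaSet e eStar G (j n),
      T ∘ S ∈ SigmaSet e eStar G (j n))
    (hid : ∀ n, id ∈ SigmaSet e eStar G (j n))
    (hinv : ∀ n, ∀ T ∈ SigmaSet e eStar G (j n), ∃ S ∈ SigmaSet e eStar G (j n),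
      T ∘ S = id ∧ S ∘ T = id)
    (htail : ∀ n, ∀ g ∈ G, ∀ x ∈ tailSpan e (j n), (g : X ≃L[ℂ] X) x ∈ tailSpan e (j n))
    (hprojK : ∀ n, ∀ x ∈ K, schauderProj e eStar (j n) x ∈ K)
    (z : X) (hz : z ∉ K)
    (Q : X → ℂ) (hQ : IsContinuousPolynomial Q)
    (hsep : ∃ c, c < ‖Q z‖ ∧ ∀ w ∈ K, ‖Q w‖ ≤ c) :
    (∃ P : X → ℂ, IsContinuousPolynomial P ∧
      (∀ g ∈ G, ∀ x : X, P ((g : X ≃L[ℂ] X) x) = P x) ∧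
      ∃ c, c < ‖P z‖ ∧ ∀ w ∈ K, ‖P w‖ ≤ c) ∧
    ∀ m : ℕ, IsHomogeneousPolynomial m Q →
      ∃ (m' : ℕ) (P : X → ℂ), IsHomogeneousPolynomial m' P ∧
        (∀ g ∈ G, ∀ x : X, P ((g : X ≃L[ℂ] X) x) = P x) ∧
        ∃ c, c < ‖P z‖ ∧ ∀ w ∈ K, ‖P w‖ ≤ c :=
  statement8_general e eStar hdual hbasis G K hK j hjmono hfin hcomp hid hinv htail hprojK z Q hQ
    hsep
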